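/- Let A_c = {a₁ ≺ a₂ ≺ ⋯ ≺ a_N} be a c-compatible linear order. Then for any t, the cyclically shifted order a_t ≺ a_{t+1} ≺ ⋯ ≺ a_N ≺ a₁ ≺ ⋯ ≺ a_{t−1} is also c-compatible. -/

import Mathlib

variable {G : Type*} [Group G]

/-- `A` generates `G` as a monoid. -/
def GeneratesM (A : Set G) : Prop :=
  ∀ x : G, ∃ l : List G, (∀ a ∈ l, a ∈ A) ∧ l.prod = x

/-- `A` is closed under `G`-conjugation. -/
def ConjClosed (A : Set G) : Prop :=
  ∀ g a : G, a ∈ A → g * a * g⁻¹ ∈ A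

/-- The `A`-length of `x`: minimal number of factors from `A` needed to write `x`. -/
noncomputable def lenA (A : Set G) (x : G) : ℕ :=
  sInf {n : ℕ | ∃ l : List G, (∀ a ∈ l, a ∈ A) ∧ l.prod = x ∧ l.length = n}

/-- The `A`-prefix order. -/
def leA (A : Set G) (x y : G) : Prop :=
  lenA A x + lenA A (x⁻¹ * y) = lenA A y

/-- The set of reduced `A`-factorizations of `x`, as lists. -/
def RedA (A : Set G) (x : G) : Set (List G) :=
  {l : List G | (∀ a ∈ l, a ∈ A) ∧ l.prod = x ∧ l.length = lenA A x}

/-- `A_c`: the generators occurring below `c`. -/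
def Ac (A : Set G) (c : G) : Set G := {a : G | a ∈ A ∧ leA A a c}

/-- A single Hurwitz move on factorizations. -/
def HurwitzMove : List G → List G → Prop := fun l m =>
  ∃ (p s : List G) (a b : G),
    l = p ++ a :: b :: s ∧ m = p ++ b :: (b⁻¹ * a * b) :: s

/-- `r` is a linear order on the set `S`. -/
def IsLinearOrderOn (S : Set G) (r : G → G → Prop) : Prop :=
  (∀ a ∈ S, r a a) ∧
  (∀ a ∈ S, ∀ b ∈ S, r a b → r b a → a = b) ∧
  (∀ a ∈ S, ∀ b ∈ S, ∀ c ∈ S, r a b → r b c → r a c) ∧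
  (∀ a ∈ S, ∀ b ∈ S, r a b ∨ r b a)

/-- `r` is a `c`-compatible order: every length-2 element below `c` has a unique
rising reduced factorization. -/
def CompatibleOrder (A : Set G) (c : G) (r : G → G → Prop) : Prop :=
  ∀ g : G, leA A g c → lenA A g = 2 →
    ∃! l : List G, l ∈ RedA A g ∧ l.Chain' r

/-- Two factorizations correspond to maximal chains differing in exactly one element. -/
def ChainAdj (l m : List G) : Prop :=
  l ≠ m ∧ ∃ (p s : List G) (a b a' b' : G),
    l = p ++ a :: b :: s ∧ m = p ++ a' :: b' :: s ∧ a * b = a' * b'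

/-- Covering relation in the graded factorization poset. -/
def CoversA (A : Set G) (x y : G) : Prop := leA A x y ∧ lenA A y = lenA A x + 1

/-- `F_≺(a; g)`: upper covers of the atom `a` in `P_g` that also cover a strictly
smaller atom. -/
def Fset (A : Set G) (r : G → G → Prop) (a g : G) : Set G :=
  {h : G | CoversA A a h ∧ leA A h g ∧
    ∃ a' ∈ A, a' ≠ a ∧ r a' a ∧ CoversA A a' h}

/-- `P_c` is well-covered with respect to `r`. -/
def WellCovered (A : Set G) (c : G) (r : G → G → Prop) : Prop :=
  ∀ a ∈ A, leA A a c →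
    (Fset A r a c = ∅ ↔ ∀ b ∈ A, leA A b c → r a b)

/-- `P_c` is totally well-covered with respect to `r`. -/
def TotallyWellCovered (A : Set G) (c : G) (r : G → G → Prop) : Prop :=
  ∀ g : G, leA A g c → WellCovered A g r

/-!
For `g ≤ c` of length two, the reduced factorizations of `g` are the pairs `(a, a⁻¹ g)` of atoms
of `A_c`, and conjugation-closure makes `a ↦ a⁻¹ g` a permutation of the atoms below `g`.
Compatibility says that exactly one edge `a ↦ a⁻¹ g` of this permutation rises. Rotating the
order by one step moves its minimum `s` to the top; only the edges leaving and entering `s`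
change status, and the rising edge leaving `s` (when `s` is not a fixed point) is traded for
the edge entering `s`. Induction on `t` finishes the proof.
-/

theorem Function.Injective.existsUnique_comp_iff {α β : Type*} {f : β → α} (hf : f.Injective)
    {P : α → Prop} (hP : ∀ a, P a → a ∈ Set.range f) : (∃! a, P a) ↔ ∃! b, P (f b) := by
  constructor
  · rintro ⟨a, ha, hu⟩
    obtain ⟨b, rfl⟩ := hP a ha
    exact ⟨b, ha, fun b' hb' => hf (hu _ hb')⟩
  · rintro ⟨b, hb, hu⟩
    refine ⟨f b, hb, fun a ha => ?_⟩
    obtain ⟨b', rfl⟩ := hP a ha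
    rw [hu b' ha]

theorem Fin.val_sub_add_one {n : ℕ} (i t : Fin (n + 1)) :
    (i - (t + 1)).val = if i = t then n else (i - t).val - 1 := by
  simp only [← sub_sub, Fin.coe_sub_one, sub_eq_zero]

/-- `R` is the graph of a permutation of its domain, which is also its range. -/
structure IsPermGraph {α : Type*} (R : α → α → Prop) : Prop where
  left_unique : Relator.LeftUnique R
  right_unique : Relator.RightUnique R
  exists_next : ∀ ⦃i j⦄, R i j → ∃ k, R j k
  exists_prev : ∀ ⦃i j⦄, R i j → ∃ k, R k i

namespace IsPermGraph

variable {α β : Type*} [Preorder β] {R : α → α → Prop}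

theorem existsUnique_rising_of_min_to_max (hR : IsPermGraph R) {f f' : α → β} {s : α}
    (hmin : ∀ j, j ≠ s → f s < f j) (hmax : ∀ j, j ≠ s → f' j < f' s)
    (hff' : ∀ i j, i ≠ s → j ≠ s → (f' i ≤ f' j ↔ f i ≤ f j))
    (h : ∃! p : α × α, R p.1 p.2 ∧ f p.1 ≤ f p.2) :
    ∃! p : α × α, R p.1 p.2 ∧ f' p.1 ≤ f' p.2 := by
  by_cases hs : ∃ j, R s j ∧ j ≠ s
  · -- the rising edge `(s, j₀)` is replaced by the edge `(i₀, s)` into `s`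
    obtain ⟨j₀, hsj₀, hj₀s⟩ := hs
    obtain ⟨p, -, hpu⟩ := h
    have hp : (s, j₀) = p := hpu _ ⟨hsj₀, (hmin j₀ hj₀s).le⟩
    obtain ⟨i₀, hi₀s⟩ := hR.exists_prev hsj₀
    refine ⟨(i₀, s), ⟨hi₀s, ?_⟩, ?_⟩
    · rcases eq_or_ne i₀ s with rfl | hi₀
      · exact le_rfl
      · exact (hmax i₀ hi₀).le
    · rintro ⟨i, j⟩ ⟨hij, hle⟩
      rcases eq_or_ne j s with rfl | hj
      · exact Prod.ext (hR.left_unique hij hi₀s) rfl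
      have hi : i ≠ s := by
        rintro rfl
        exact (hmax j hj).not_ge hle
      have hip : i = p.1 := congrArg Prod.fst (hpu (i, j) ⟨hij, (hff' i j hi hj).mp hle⟩)
      exact absurd (hip.trans (congrArg Prod.fst hp).symm) hi
  · -- no edge leaves `s` except possibly a loop, so no edge meets `s` and nothing changes
    push Not at hs
    have hiff : ∀ i j, R i j → (f i ≤ f j ↔ f' i ≤ f' j) := by
      intro i j hij
      rcases eq_or_ne i s with rfl | hi
      · rw [hs j hij]
        exact iff_of_true le_rfl le_rfl
      rcases eq_or_ne j s with rfl | hj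
      · obtain ⟨k, hjk⟩ := hR.exists_next hij
        rw [hs k hjk] at hjk
        exact absurd (hR.left_unique hij hjk) hi
      exact (hff' i j hi hj).symm
    exact (existsUnique_congr fun p : α × α => and_congr_right (hiff p.1 p.2)).mp h

end IsPermGraph

theorem IsPermGraph.existsUnique_rising_sub {n : ℕ} {R : Fin (n + 1) → Fin (n + 1) → Prop}
    (hR : IsPermGraph R) (h : ∃! p : Fin (n + 1) × Fin (n + 1), R p.1 p.2 ∧ p.1 ≤ p.2)
    (t : Fin (n + 1)) :
    ∃! p : Fin (n + 1) × Fin (n + 1), R p.1 p.2 ∧ (p.1 - t).val ≤ (p.2 - t).val := by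
  induction t using Fin.induction with
  | zero => simpa using h
  | succ t ih =>
    have hpos : ∀ j, j ≠ t.castSucc → 0 < (j - t.castSucc).val := fun j hj =>
      Nat.pos_of_ne_zero (by simpa [Fin.val_eq_zero_iff, sub_eq_zero] using hj)
    rw [← Fin.coeSucc_eq_succ]
    refine hR.existsUnique_rising_of_min_to_max (f := fun i => (i - t.castSucc).val)
      (f' := fun i => (i - (t.castSucc + 1)).val) (s := t.castSucc) ?_ ?_ ?_ ih
    · intro j hj
      simpa using hpos j hj
    · intro j hj
      simp only [Fin.val_sub_add_one, if_neg hj, if_true]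
      have := (j - t.castSucc).isLt
      omega
    · intro i j hi hj
      simp only [Fin.val_sub_add_one, if_neg hi, if_neg hj]
      have := hpos i hi
      have := hpos j hj
      omega

section Factorizations

variable {A : Set G}

theorem lenA_prod_le_length {l : List G} (hl : ∀ a ∈ l, a ∈ A) : lenA A l.prod ≤ l.length :=
  Nat.sInf_le ⟨l, hl, rfl, rfl⟩

theorem exists_mem_RedA (hgen : GeneratesM A) (x : G) : ∃ l, l ∈ RedA A x := by
  obtain ⟨l, hl, hx⟩ := hgen x
  exact Nat.sInf_mem (s := {n | ∃ l : List G, (∀ a ∈ l, a ∈ A) ∧ l.prod = x ∧ l.length = n})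
    ⟨l.length, l, hl, hx, rfl⟩

theorem lenA_mul_le (hgen : GeneratesM A) (x y : G) : lenA A (x * y) ≤ lenA A x + lenA A y := by
  obtain ⟨l₁, hl₁, rfl, hlen₁⟩ := exists_mem_RedA hgen x
  obtain ⟨l₂, hl₂, rfl, hlen₂⟩ := exists_mem_RedA hgen y
  have hl : ∀ a ∈ l₁ ++ l₂, a ∈ A := fun a ha => (List.mem_append.mp ha).elim (hl₁ a) (hl₂ a)
  simpa [hlen₁, hlen₂] using lenA_prod_le_length hl

theorem leA_trans (hgen : GeneratesM A) {x y z : G} (hxy : leA A x y) (hyz : leA A y z) :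
    leA A x z := by
  have h₁ := lenA_mul_le hgen (x⁻¹ * y) (y⁻¹ * z)
  have h₂ := lenA_mul_le hgen x (x⁻¹ * z)
  simp only [mul_assoc, mul_inv_cancel_left] at h₁ h₂
  unfold leA at *
  omega

theorem leA_prod_of_append_mem_RedA (hgen : GeneratesM A) {l₁ l₂ : List G} {g : G}
    (h : l₁ ++ l₂ ∈ RedA A g) : leA A l₁.prod g := by
  obtain ⟨hmem, hprod, hlen⟩ := h
  have hsuffix : l₁.prod⁻¹ * g = l₂.prod := by rw [← hprod, List.prod_append, inv_mul_cancel_left]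
  have h₁ := lenA_prod_le_length fun a ha => hmem a (List.mem_append_left l₂ ha)
  have h₂ := lenA_prod_le_length fun a ha => hmem a (List.mem_append_right l₁ ha)
  have h₃ := lenA_mul_le hgen l₁.prod (l₁.prod⁻¹ * g)
  rw [mul_inv_cancel_left] at h₃
  rw [List.length_append] at hlen
  unfold leA
  rw [hsuffix] at h₃ ⊢
  omega

theorem HurwitzMove.mem_RedA_iff (hconj : ConjClosed A) {l m : List G} (h : HurwitzMove l m)
    {g : G} : l ∈ RedA A g ↔ m ∈ RedA A g := by
  obtain ⟨p, s, a, b, rfl, rfl⟩ := h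
  have hprod : (p ++ a :: b :: s).prod = (p ++ b :: (b⁻¹ * a * b) :: s).prod := by
    simp only [List.prod_append, List.prod_cons, mul_assoc, mul_inv_cancel_left]
  have hconj' : b ∈ A → (a ∈ A ↔ b⁻¹ * a * b ∈ A) := fun hb =>
    ⟨fun ha => by simpa using hconj b⁻¹ a ha, fun ha => by simpa [mul_assoc] using hconj b _ ha⟩
  simp only [RedA, Set.mem_ofPred_eq, hprod, List.length_append, List.length_cons,
    List.mem_append, List.mem_cons, or_imp, forall_and, forall_eq]
  constructor
  · rintro ⟨⟨hp, ha, hb, hs⟩, h⟩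
    exact ⟨⟨hp, hb, (hconj' hb).mp ha, hs⟩, h⟩
  · rintro ⟨⟨hp, hb, ha, hs⟩, h⟩
    exact ⟨⟨hp, (hconj' hb).mpr ha, hb, hs⟩, h⟩

end Factorizations

section AtomsBelow

variable {A : Set G} {ι : Type*} {e : ι → G} {a b c g : G}

theorem mul_eq_of_pair_mem_RedA (h : [a, b] ∈ RedA A g) : a * b = g := by
  simpa using h.2.1

theorem mem_Ac_of_cons_mem_RedA (hgen : GeneratesM A) {l : List G} (h : a :: l ∈ RedA A g)
    (hgc : leA A g c) : a ∈ Ac A c :=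
  ⟨h.1 a List.mem_cons_self,
    leA_trans hgen (by simpa using leA_prod_of_append_mem_RedA hgen (l₁ := [a]) h) hgc⟩

theorem pair_mem_Ac (hgen : GeneratesM A) (hconj : ConjClosed A) (h : [a, b] ∈ RedA A g)
    (hgc : leA A g c) : a ∈ Ac A c ∧ b ∈ Ac A c :=
  ⟨mem_Ac_of_cons_mem_RedA hgen h hgc, mem_Ac_of_cons_mem_RedA hgen
    ((HurwitzMove.mem_RedA_iff hconj ⟨[], [], a, b, rfl, rfl⟩).mp h) hgc⟩

theorem mem_range_pair_of_mem_RedA (hgen : GeneratesM A) (hconj : ConjClosed A)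
    (hrange : Set.range e = Ac A c) (hgc : leA A g c) (hg2 : lenA A g = 2) {l : List G}
    (hl : l ∈ RedA A g) : l ∈ Set.range fun p : ι × ι => [e p.1, e p.2] := by
  obtain ⟨a, b, rfl⟩ := List.length_eq_two.mp (hl.2.2.trans hg2)
  obtain ⟨ha, hb⟩ := pair_mem_Ac hgen hconj hl hgc
  rw [← hrange] at ha hb
  obtain ⟨i, rfl⟩ := ha
  obtain ⟨j, rfl⟩ := hb
  exact ⟨(i, j), rfl⟩

theorem isPermGraph_pair_mem_RedA (hgen : GeneratesM A) (hconj : ConjClosed A)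
    (he : e.Injective) (hrange : Set.range e = Ac A c) (hgc : leA A g c) :
    IsPermGraph fun i j => [e i, e j] ∈ RedA A g where
  left_unique _ _ _ h h' :=
    he (mul_right_cancel ((mul_eq_of_pair_mem_RedA h).trans (mul_eq_of_pair_mem_RedA h').symm))
  right_unique _ _ _ h h' :=
    he (mul_left_cancel ((mul_eq_of_pair_mem_RedA h).trans (mul_eq_of_pair_mem_RedA h').symm))
  exists_next i j h := by
    have h' := (HurwitzMove.mem_RedA_iff hconj ⟨[], [], e i, e j, rfl, rfl⟩).mp h
    obtain ⟨k, hk⟩ : (e j)⁻¹ * e i * e j ∈ Set.range e := hrange ▸ (pair_mem_Ac hgen hconj h' hgc).2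
    exact ⟨k, hk ▸ h'⟩
  exists_prev i j h := by
    have h' := (HurwitzMove.mem_RedA_iff hconj
      ⟨[], [], e i * e j * (e i)⁻¹, e i, rfl, by simp [mul_assoc]⟩).mpr h
    obtain ⟨k, hk⟩ : e i * e j * (e i)⁻¹ ∈ Set.range e :=
      hrange ▸ (pair_mem_Ac hgen hconj h' hgc).1
    exact ⟨k, hk ▸ h'⟩

theorem existsUnique_isChain_iff_pair (he : e.Injective) {r : ι → ι → Prop}
    (hred : ∀ l ∈ RedA A g, l ∈ Set.range fun p : ι × ι => [e p.1, e p.2]) :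
    (∃! l : List G, l ∈ RedA A g ∧ l.IsChain fun x y => ∃ i j, x = e i ∧ y = e j ∧ r i j) ↔
      ∃! p : ι × ι, [e p.1, e p.2] ∈ RedA A g ∧ r p.1 p.2 := by
  have hpair : (fun p : ι × ι => [e p.1, e p.2]).Injective := fun p q hpq => by
    simp only [List.cons.injEq, he.eq_iff, and_true] at hpq
    exact Prod.ext hpq.1 hpq.2
  rw [hpair.existsUnique_comp_iff fun l hl => hred l hl.1]
  refine existsUnique_congr fun p => and_congr_right fun _ => ?_
  simp [he.eq_iff]

end AtomsBelow

theorem compatible_cyclic_shift_general (A : Set G) (hgen : GeneratesM A)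
    (hconj : ConjClosed A) (c : G)
    (N : ℕ) (e : Fin N → G) (he : Function.Injective e)
    (hrange : Set.range e = Ac A c)
    (hcomp : CompatibleOrder A c
      (fun x y => ∃ i j : Fin N, x = e i ∧ y = e j ∧ i.val ≤ j.val))
    (t : Fin N) :
    CompatibleOrder A c
      (fun x y => ∃ i j : Fin N, x = e i ∧ y = e j ∧
        (i.val + N - t.val) % N ≤ (j.val + N - t.val) % N) := by
  obtain ⟨n, rfl⟩ : ∃ n, N = n + 1 := Nat.exists_eq_add_one.mpr t.pos
  intro g hgc hg2
  have hred : ∀ l ∈ RedA A g, l ∈ Set.range fun p : Fin (n + 1) × Fin (n + 1) => [e p.1, e p.2] :=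
    fun l => mem_range_pair_of_mem_RedA hgen hconj hrange hgc hg2
  have hrising := (isPermGraph_pair_mem_RedA hgen hconj he hrange hgc).existsUnique_rising_sub
    ((existsUnique_isChain_iff_pair he hred).mp (hcomp g hgc hg2)) t
  have hkey : ∀ i : Fin (n + 1), (i - t).val = (i.val + (n + 1) - t.val) % (n + 1) := fun i => by
    rw [Fin.val_sub]
    congr 1
    omega
  simp only [hkey] at hrising
  exact (existsUnique_isChain_iff_pair he hred).mpr hrising

theorem compatible_cyclic_shift (A : Set G) (hgen : GeneratesM A)
    (hconj : ConjClosed A) (c : G) (hfin : (RedA A c).Finite)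
    (N : ℕ) (e : Fin N → G) (he : Function.Injective e)
    (hrange : Set.range e = Ac A c)
    (hlin : IsLinearOrderOn (Ac A c)
      (fun x y => ∃ i j : Fin N, x = e i ∧ y = e j ∧ i.val ≤ j.val))
    (hcomp : CompatibleOrder A c
      (fun x y => ∃ i j : Fin N, x = e i ∧ y = e j ∧ i.val ≤ j.val))
    (t : Fin N) :
    CompatibleOrder A c
      (fun x y => ∃ i j : Fin N, x = e i ∧ y = e j ∧
        (i.val + N - t.val) % N ≤ (j.val + N - t.val) % N) :=
  compatible_cyclic_shift_general A hgen hconj c N e he hrange hcomp t
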